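/- Fix α > 0 and n > 0. Let q: [0,1] → ℝ be absolutely continuous with q(0) = 0, ∫₀¹ q′(x)² dx ≤ n, and ∫₀¹ (1−x)^α q(x)² dx ≤ 1. Then sup_{x∈[0,1]} |q(x)| ≤ c_α n^{(1+α)/(2(2+α))} for a constant c_α depending only on α, and for every ε ∈ (0,1), sup_{x∈[0,1−ε]} |q(x)| ≤ c_{α,ε} n^{1/4} for a constant c_{α,ε} depending only on (α, ε). -/

import Mathlib

/-!
By Cauchy–Schwarz, `q` is `1/2`-Hölder: `|q x - q y| ≤ √(n |x - y|)`. On an interval of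
length `δ` ending at distance `d` from `1` the weight is at least `d ^ α`, so the weighted
`L²` bound produces a point there with `q² ≤ (δ d ^ α)⁻¹`. Together,
`|q x| ≤ (δ d ^ α)^(-1/2) + (n δ)^(1/2)` for `x ≤ 1 - d`. Taking `d = δ ≍ n^(-1/(2+α))`
balances the two terms and gives the global bound; keeping `d = ε` and taking `δ ≍ n^(-1/2)`
gives the bound on `[0, 1 - ε]`. For `n ≤ 1` the Hölder bound `|q x| ≤ √n` already suffices.
-/

open MeasureTheory intervalIntegral Set Filter Topology

theorem sq_intervalIntegral_le_mul_intervalIntegral_sq {g : ℝ → ℝ} {a b : ℝ} (hab : a ≤ b)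
    (hg : IntervalIntegrable g volume a b)
    (hg2 : IntervalIntegrable (fun t => g t ^ 2) volume a b) :
    (∫ t in a..b, g t) ^ 2 ≤ (b - a) * ∫ t in a..b, g t ^ 2 := by
  have hquad : ∀ L : ℝ,
      0 ≤ (b - a) * (L * L) + (-2 * ∫ t in a..b, g t) * L + ∫ t in a..b, g t ^ 2 := by
    intro L
    have hexpand : ∫ t in a..b, (g t - L) ^ 2 =
        (∫ t in a..b, g t ^ 2) - 2 * L * (∫ t in a..b, g t) + (b - a) * L ^ 2 := by
      simp_rw [sub_sq]
      rw [integral_add (hg2.sub (hg.const_mul _ |>.mul_const _)) intervalIntegrable_const,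
        integral_sub hg2 (hg.const_mul _ |>.mul_const _), intervalIntegral.integral_mul_const,
        intervalIntegral.integral_const_mul,
        intervalIntegral.integral_const, smul_eq_mul]
      ring
    have : 0 ≤ ∫ t in a..b, (g t - L) ^ 2 := integral_nonneg hab fun t _ => sq_nonneg _
    linarith
  have := discrim_le_zero hquad
  rw [discrim] at this
  linarith

theorem abs_sub_le_sqrt_of_eq_primitive {q g : ℝ → ℝ} {a b n : ℝ}
    (hg : IntervalIntegrable g volume a b)
    (hg2 : IntervalIntegrable (fun t => g t ^ 2) volume a b)
    (hq : ∀ x ∈ Icc a b, q x = ∫ t in a..x, g t) (hgn : (∫ t in a..b, g t ^ 2) ≤ n) :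
    ∀ x ∈ Icc a b, ∀ y ∈ Icc a b, |q x - q y| ≤ √(n * |x - y|) := by
  intro x hx y hy
  wlog hyx : y ≤ x generalizing x y
  · rw [abs_sub_comm, abs_sub_comm x]
    exact this y hy x hx (le_of_not_ge hyx)
  have hsub : uIcc y x ⊆ uIcc a b := uIcc_subset_uIcc (Icc_subset_uIcc hy) (Icc_subset_uIcc hx)
  have hsub_a : uIcc a y ⊆ uIcc a b := uIcc_subset_uIcc left_mem_uIcc (Icc_subset_uIcc hy)
  have hsub_x : uIcc a x ⊆ uIcc a b := uIcc_subset_uIcc left_mem_uIcc (Icc_subset_uIcc hx)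
  have hdiff : q x - q y = ∫ t in y..x, g t := by
    rw [hq x hx, hq y hy, integral_interval_sub_left (hg.mono_set hsub_x) (hg.mono_set hsub_a)]
  have henergy : (∫ t in y..x, g t ^ 2) ≤ n :=
    (integral_mono_interval hy.1 hyx hx.2 (Eventually.of_forall fun t => sq_nonneg (g t))
      hg2).trans hgn
  rw [hdiff, abs_of_nonneg (sub_nonneg.2 hyx)]
  apply Real.abs_le_sqrt
  calc (∫ t in y..x, g t) ^ 2 ≤ (x - y) * ∫ t in y..x, g t ^ 2 :=
        sq_intervalIntegral_le_mul_intervalIntegral_sq hyx (hg.mono_set hsub) (hg2.mono_set hsub)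
    _ ≤ (x - y) * n := by gcongr
    _ = n * (x - y) := mul_comm _ _

theorem continuousOn_of_abs_sub_le_sqrt {q : ℝ → ℝ} {n : ℝ} {s : Set ℝ}
    (hH : ∀ x ∈ s, ∀ y ∈ s, |q x - q y| ≤ √(n * |x - y|)) : ContinuousOn q s := by
  intro x hx
  rw [ContinuousWithinAt, tendsto_iff_dist_tendsto_zero]
  have hlim : Tendsto (fun y => √(n * |y - x|)) (𝓝[s] x) (𝓝 0) := by
    have hcont : Continuous fun y => √(n * |y - x|) := by fun_prop
    simpa using (hcont.tendsto x).mono_left nhdsWithin_le_nhds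
  refine squeeze_zero' (Eventually.of_forall fun _ => dist_nonneg) ?_ hlim
  filter_upwards [self_mem_nhdsWithin] with y hy
  exact hH y hy x hx

theorem exists_mem_Icc_mul_sq_le {q : ℝ → ℝ} {α a b d : ℝ} (hα : 0 ≤ α)
    (hc : ContinuousOn q (Icc 0 1)) (hw : (∫ x in (0 : ℝ)..1, (1 - x) ^ α * q x ^ 2) ≤ 1)
    (ha : 0 ≤ a) (hab : a ≤ b) (hbd : b ≤ 1 - d) (hd : 0 ≤ d) :
    ∃ y ∈ Icc a b, (b - a) * d ^ α * q y ^ 2 ≤ 1 := by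
  have hsub : Icc a b ⊆ Icc 0 1 := Icc_subset_Icc ha (by linarith)
  have hweight : ContinuousOn (fun x : ℝ => (1 - x) ^ α * q x ^ 2) (Icc 0 1) :=
    ((continuous_const.sub continuous_id).continuousOn.rpow_const fun _ _ => Or.inr hα).mul
      (hc.pow 2)
  obtain ⟨y, hy, hmin⟩ := isCompact_Icc.exists_isMinOn (nonempty_Icc.2 hab) ((hc.mono hsub).pow 2)
  refine ⟨y, hy, ?_⟩
  calc (b - a) * d ^ α * q y ^ 2 = ∫ _ in a..b, d ^ α * q y ^ 2 := by
        rw [intervalIntegral.integral_const, smul_eq_mul, mul_assoc]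
    _ ≤ ∫ x in a..b, (1 - x) ^ α * q x ^ 2 := by
        refine integral_mono_on hab intervalIntegrable_const
          ((hweight.mono hsub).intervalIntegrable_of_Icc hab) fun x hx => ?_
        exact mul_le_mul (Real.rpow_le_rpow hd (by linarith [hx.2]) hα) (hmin hx) (sq_nonneg _)
          (Real.rpow_nonneg (by linarith [hx.2]) α)
    _ ≤ ∫ x in (0 : ℝ)..1, (1 - x) ^ α * q x ^ 2 := by
        refine integral_mono_interval ha hab (by linarith) ?_
          (hweight.intervalIntegrable_of_Icc zero_le_one)
        filter_upwards [ae_restrict_mem measurableSet_Ioc] with x hx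
        exact mul_nonneg (Real.rpow_nonneg (by linarith [hx.2]) α) (sq_nonneg _)
    _ ≤ 1 := hw

theorem abs_le_of_mem_Icc_zero_one_sub {q : ℝ → ℝ} {n α δ d x : ℝ} (hn : 0 ≤ n) (hα : 0 ≤ α)
    (hH : ∀ x ∈ Icc (0 : ℝ) 1, ∀ y ∈ Icc (0 : ℝ) 1, |q x - q y| ≤ √(n * |x - y|))
    (hw : (∫ x in (0 : ℝ)..1, (1 - x) ^ α * q x ^ 2) ≤ 1)
    (hδ : 0 < δ) (hd : 0 < d) (hδd : δ + d ≤ 1) (hx : x ∈ Icc 0 (1 - d)) :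
    |q x| ≤ √((δ * d ^ α)⁻¹) + √(n * δ) := by
  set a := min x (1 - d - δ)
  have hxa : a ≤ x := min_le_left _ _
  have hxb : x ≤ a + δ := by
    rw [← min_add_add_right]
    exact le_min (by linarith) (by linarith [hx.2])
  have ha : 0 ≤ a := le_min hx.1 (by linarith)
  have hbd : a + δ ≤ 1 - d := by linarith [min_le_right x (1 - d - δ)]
  obtain ⟨y, hy, hqy⟩ := exists_mem_Icc_mul_sq_le (b := a + δ) hα
    (continuousOn_of_abs_sub_le_sqrt hH) hw ha (by linarith) hbd hd.le
  rw [add_sub_cancel_left] at hqy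
  have hy_small : |q y| ≤ √((δ * d ^ α)⁻¹) := by
    refine Real.abs_le_sqrt ?_
    rw [← one_div, le_div_iff₀ (by positivity)]
    linarith
  have hxy : |x - y| ≤ δ := abs_sub_le_iff.2 ⟨by linarith [hy.1], by linarith [hy.2]⟩
  have hxy_close : |q x - q y| ≤ √(n * δ) :=
    (hH x ⟨hx.1, by linarith [hx.2]⟩ y ⟨ha.trans hy.1, by linarith [hy.2, hbd]⟩).trans
      (Real.sqrt_le_sqrt (mul_le_mul_of_nonneg_left hxy hn))
  linarith [abs_sub_abs_le_abs_sub (q x) (q y)]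

theorem abs_le_of_mem_Icc_zero_one {q : ℝ → ℝ} {n α δ x : ℝ} (hn : 0 ≤ n) (hα : 0 ≤ α)
    (hH : ∀ x ∈ Icc (0 : ℝ) 1, ∀ y ∈ Icc (0 : ℝ) 1, |q x - q y| ≤ √(n * |x - y|))
    (hw : (∫ x in (0 : ℝ)..1, (1 - x) ^ α * q x ^ 2) ≤ 1)
    (hδ : 0 < δ) (hδ2 : δ ≤ 1 / 2) (hx : x ∈ Icc (0 : ℝ) 1) :
    |q x| ≤ √((δ * δ ^ α)⁻¹) + 2 * √(n * δ) := by
  set x' := min x (1 - δ)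
  have hx' : x' ∈ Icc 0 (1 - δ) := ⟨le_min hx.1 (by linarith), min_le_right _ _⟩
  have hxx' : |x - x'| ≤ δ := by
    rw [abs_of_nonneg (sub_nonneg.2 (min_le_left _ _)), sub_le_iff_le_add', ← min_add_add_right]
    exact le_min (by linarith) (by linarith [hx.2])
  have hclose : |q x - q x'| ≤ √(n * δ) :=
    (hH x hx x' ⟨hx'.1, by linarith [hx'.2]⟩).trans
      (Real.sqrt_le_sqrt (mul_le_mul_of_nonneg_left hxx' hn))
  have := abs_le_of_mem_Icc_zero_one_sub hn hα hH hw hδ hδ (by linarith) hx'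
  linarith [abs_sub_abs_le_abs_sub (q x) (q x')]

theorem abs_le_sqrt_of_map_zero {q : ℝ → ℝ} {n x : ℝ} (hn : 0 ≤ n) (hq0 : q 0 = 0)
    (hH : ∀ x ∈ Icc (0 : ℝ) 1, ∀ y ∈ Icc (0 : ℝ) 1, |q x - q y| ≤ √(n * |x - y|))
    (hx : x ∈ Icc (0 : ℝ) 1) : |q x| ≤ √n := by
  have := hH x hx 0 (left_mem_Icc.2 zero_le_one)
  rw [hq0, sub_zero, sub_zero, abs_of_nonneg hx.1] at this
  exact this.trans (Real.sqrt_le_sqrt (mul_le_of_le_one_right hn hx.2))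

theorem sqrt_le_mul_rpow_of_le_one {n e C : ℝ} (hn : 0 < n) (hn1 : n ≤ 1) (he : e ≤ 1 / 2)
    (hC : 1 ≤ C) : √n ≤ C * n ^ e :=
  calc √n = n ^ (1 / 2 : ℝ) := Real.sqrt_eq_rpow n
    _ ≤ n ^ e := Real.rpow_le_rpow_of_exponent_ge hn hn1 he
    _ ≤ C * n ^ e := le_mul_of_one_le_left (Real.rpow_nonneg hn.le e) hC

theorem abs_le_mul_rpow_of_mem_Icc_zero_one {q : ℝ → ℝ} {n α x : ℝ} (hn : 0 < n) (hα : 0 ≤ α)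
    (hq0 : q 0 = 0)
    (hH : ∀ x ∈ Icc (0 : ℝ) 1, ∀ y ∈ Icc (0 : ℝ) 1, |q x - q y| ≤ √(n * |x - y|))
    (hw : (∫ x in (0 : ℝ)..1, (1 - x) ^ α * q x ^ 2) ≤ 1) (hx : x ∈ Icc (0 : ℝ) 1) :
    |q x| ≤ ((4 : ℝ) ^ ((1 + α) / 2) + 1) * n ^ ((1 + α) / (2 * (2 + α))) := by
  rcases le_total n 1 with hn1 | hn1
  · have hC : (0 : ℝ) ≤ 4 ^ ((1 + α) / 2) := by positivity
    refine (abs_le_sqrt_of_map_zero hn.le hq0 hH hx).trans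
      (sqrt_le_mul_rpow_of_le_one hn hn1 ?_ (by linarith))
    rw [div_le_div_iff₀ (by positivity) (by norm_num)]
    linarith
  · set m := n ^ (2 + α)⁻¹
    have hm : 1 ≤ m := Real.one_le_rpow hn1 (by positivity)
    have hδ : 0 < (4 * m)⁻¹ := by positivity
    have := abs_le_of_mem_Icc_zero_one hn.le hα hH hw hδ
      (by rw [inv_le_comm₀ (by positivity) (by norm_num)]; linarith) hx
    have hA : √(((4 * m)⁻¹ * (4 * m)⁻¹ ^ α)⁻¹) =
        (4 : ℝ) ^ ((1 + α) / 2) * n ^ ((1 + α) / (2 * (2 + α))) := by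
      have hsq : ((4 * m)⁻¹ * (4 * m)⁻¹ ^ α)⁻¹ =
          ((4 : ℝ) ^ ((1 + α) / 2) * n ^ ((1 + α) / (2 * (2 + α)))) ^ 2 := by
        rw [Real.inv_rpow (by positivity), ← mul_inv, inv_inv,
          ← Real.rpow_one_add' (by positivity) (by positivity),
          Real.mul_rpow (by norm_num) (by positivity), ← Real.rpow_mul hn.le, mul_pow,
          ← Real.rpow_mul_natCast (by norm_num), ← Real.rpow_mul_natCast hn.le, Nat.cast_ofNat]
        congr 2 <;> field_simp
      rw [hsq, Real.sqrt_sq (by positivity)]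
    have hB : 2 * √(n * (4 * m)⁻¹) = n ^ ((1 + α) / (2 * (2 + α))) := by
      have hsq : n * (4 * m)⁻¹ = (n ^ ((1 + α) / (2 * (2 + α))) / 2) ^ 2 := by
        rw [div_pow, ← Real.rpow_mul_natCast hn.le,
          show (1 + α) / (2 * (2 + α)) * ((2 : ℕ) : ℝ) = 1 - (2 + α)⁻¹ by field_simp; ring,
          Real.rpow_sub hn, Real.rpow_one]
        ring
      rw [hsq, Real.sqrt_sq (by positivity)]
      ring
    linarith

theorem abs_le_mul_rpow_of_mem_Icc_zero_one_sub {q : ℝ → ℝ} {n α ε x : ℝ} (hn : 0 < n)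
    (hα : 0 ≤ α) (hε : ε ∈ Ioo (0 : ℝ) 1) (hq0 : q 0 = 0)
    (hH : ∀ x ∈ Icc (0 : ℝ) 1, ∀ y ∈ Icc (0 : ℝ) 1, |q x - q y| ≤ √(n * |x - y|))
    (hw : (∫ x in (0 : ℝ)..1, (1 - x) ^ α * q x ^ 2) ≤ 1) (hx : x ∈ Icc 0 (1 - ε)) :
    |q x| ≤ (√(((1 - ε) * ε ^ α)⁻¹) + 1) * n ^ (1 / 4 : ℝ) := by
  obtain ⟨hε0, hε1⟩ := hε
  rcases le_total n 1 with hn1 | hn1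
  · exact (abs_le_sqrt_of_map_zero hn.le hq0 hH ⟨hx.1, by linarith [hx.2]⟩).trans
      (sqrt_le_mul_rpow_of_le_one hn hn1 (by norm_num)
        (le_add_of_nonneg_left (Real.sqrt_nonneg _)))
  · have hr : 1 ≤ √n := Real.one_le_sqrt.2 hn1
    have hquarter : n ^ (1 / 4 : ℝ) = √(√n) := by
      rw [Real.sqrt_eq_rpow, Real.sqrt_eq_rpow, ← Real.rpow_mul hn.le]
      norm_num
    have hδ : 0 < (1 - ε) / √n := div_pos (by linarith) (by positivity)
    have := abs_le_of_mem_Icc_zero_one_sub hn.le hα hH hw hδ hε0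
      (by linarith [div_le_self (by linarith : 0 ≤ 1 - ε) hr]) hx
    have hA : √(((1 - ε) / √n * ε ^ α)⁻¹) = √(((1 - ε) * ε ^ α)⁻¹) * n ^ (1 / 4 : ℝ) := by
      rw [hquarter, ← Real.sqrt_mul (by positivity), div_mul_eq_mul_div, inv_div, div_eq_mul_inv,
        mul_comm]
    have hB : √(n * ((1 - ε) / √n)) ≤ n ^ (1 / 4 : ℝ) := by
      rw [hquarter, mul_div_left_comm, Real.div_sqrt]
      exact Real.sqrt_le_sqrt (mul_le_of_le_one_left (by positivity) (by linarith))
    linarith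

/-- sup-norm bounds for functions with bounded Sobolev energy and
bounded weighted L²-norm
(Lemma lemma:perturb-func-bound-under-cons-for-missing-data-example).
Absolute continuity of `q` with `q 0 = 0` and square-integrable derivative is
encoded by `q x = ∫ t in 0..x, g t` with `g` square-integrable. -/
theorem statement19 (α : ℝ) (hα : 0 < α) :
    (∃ cα : ℝ, 0 < cα ∧
      ∀ (n : ℝ), 0 < n → ∀ q g : ℝ → ℝ,
        IntervalIntegrable g volume 0 1 →
        IntervalIntegrable (fun t => g t ^ 2) volume 0 1 →
        (∀ x ∈ Set.Icc (0 : ℝ) 1, q x = ∫ t in (0 : ℝ)..x, g t) →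
        (∫ t in (0 : ℝ)..1, g t ^ 2) ≤ n →
        (∫ x in (0 : ℝ)..1, (1 - x) ^ α * q x ^ 2) ≤ 1 →
        ∀ x ∈ Set.Icc (0 : ℝ) 1,
          |q x| ≤ cα * n ^ ((1 + α) / (2 * (2 + α)))) ∧
    (∀ ε : ℝ, ε ∈ Set.Ioo (0 : ℝ) 1 →
      ∃ cαε : ℝ, 0 < cαε ∧
        ∀ (n : ℝ), 0 < n → ∀ q g : ℝ → ℝ,
          IntervalIntegrable g volume 0 1 →
          IntervalIntegrable (fun t => g t ^ 2) volume 0 1 →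
          (∀ x ∈ Set.Icc (0 : ℝ) 1, q x = ∫ t in (0 : ℝ)..x, g t) →
          (∫ t in (0 : ℝ)..1, g t ^ 2) ≤ n →
          (∫ x in (0 : ℝ)..1, (1 - x) ^ α * q x ^ 2) ≤ 1 →
          ∀ x ∈ Set.Icc (0 : ℝ) (1 - ε),
            |q x| ≤ cαε * n ^ ((1 : ℝ) / 4)) := by
  refine ⟨⟨4 ^ ((1 + α) / 2) + 1, by positivity, fun n hn q g hg hg2 hq hgn hw x hx => ?_⟩,
    fun ε hε => ⟨√(((1 - ε) * ε ^ α)⁻¹) + 1, by positivity,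
      fun n hn q g hg hg2 hq hgn hw x hx => ?_⟩⟩
  · have hq0 : q 0 = 0 := (hq 0 (left_mem_Icc.2 zero_le_one)).trans integral_same
    exact abs_le_mul_rpow_of_mem_Icc_zero_one hn hα.le hq0
      (abs_sub_le_sqrt_of_eq_primitive hg hg2 hq hgn) hw hx
  · have hq0 : q 0 = 0 := (hq 0 (left_mem_Icc.2 zero_le_one)).trans integral_same
    exact abs_le_mul_rpow_of_mem_Icc_zero_one_sub hn hα.le hε hq0
      (abs_sub_le_sqrt_of_eq_primitive hg hg2 hq hgn) hw hx
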